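/- Let A, B ∈ Mₙ(ℂ) with n ≥ 2. Then ℂA = ℂB (i.e., A and B are scalar multiples of each other, including both zero) if and only if for every rank-one matrix R = x y*, one has x* A y = 0 ⟺ x* B y = 0. -/

import Mathlib

/-!
For a fixed column `y`, the functionals `x ↦ xᵀ A y` and `x ↦ xᵀ B y` have the same kernel, so
`B y` is a multiple `c(y) • A y`. A linear map `g` with `g u ∈ 𝕜 ∙ f u` for every `u` is a single
multiple of `f`: once `g u₀ = c₀ • f u₀` with `f u₀ ≠ 0`, comparing `u`, `u₀` and `u + u₀` forces
the same scalar everywhere. Hence `B = c • A`, and symmetrically `A = c' • B`.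
-/

open Matrix

/-- The operator (spectral) norm of a complex matrix, induced by the Euclidean norm on `ℂⁿ`. -/
noncomputable def opNorm {n : ℕ} (A : Matrix (Fin n) (Fin n) ℂ) : ℝ :=
  ‖Matrix.toEuclideanCLM (𝕜 := ℂ) (n := Fin n) A‖

/-- Birkhoff–James orthogonality of matrices with respect to the operator norm. -/
def BJ {n : ℕ} (A B : Matrix (Fin n) (Fin n) ℂ) : Prop :=
  ∀ c : ℂ, opNorm A ≤ opNorm (A + c • B)

variable {𝕜 E F : Type*} [Field 𝕜] [AddCommGroup E] [Module 𝕜 E] [AddCommGroup F] [Module 𝕜 F]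

theorem LinearMap.exists_eq_smul_of_ker_le {f g : E →ₗ[𝕜] 𝕜} (h : ker f ≤ ker g) :
    ∃ c : 𝕜, g = c • f := by
  have := mem_span_of_iInf_ker_le_ker (L := fun _ : Unit => f) (K := g) (by simpa using h)
  simpa [Submodule.mem_span_singleton, eq_comm] using this

theorem Matrix.exists_eq_smul_of_forall_dotProduct_eq_zero {ι : Type*} [Fintype ι]
    {u v : ι → 𝕜} (h : ∀ x, x ⬝ᵥ u = 0 → x ⬝ᵥ v = 0) : ∃ c : 𝕜, v = c • u := by
  classical
  obtain ⟨c, hc⟩ := LinearMap.exists_eq_smul_of_ker_le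
    (f := dotProductEquiv 𝕜 ι u) (g := dotProductEquiv 𝕜 ι v) fun x hx => by
      simpa [dotProduct_comm] using h x (by simpa [dotProduct_comm] using hx)
  exact ⟨c, (dotProductEquiv 𝕜 ι).injective (by rw [hc, map_smul])⟩

theorem LinearMap.eq_zero_of_forall_exists_apply_eq_smul {f h : E →ₗ[𝕜] F}
    (hf : ∀ u, ∃ c : 𝕜, h u = c • f u) {u₀ : E} (hu₀ : f u₀ ≠ 0) (h₀ : h u₀ = 0) : h = 0 := by
  ext u
  obtain ⟨a, ha⟩ := hf u
  obtain ⟨b, hb⟩ := hf (u + u₀)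
  rw [map_add, map_add, h₀, add_zero, ha, smul_add] at hb
  rcases eq_or_ne b 0 with rfl | hb₀
  · simpa [ha] using hb
  -- Otherwise `f u₀ = m • f u`, so `f` kills `u₀ - m • u`, hence so does `h`, and `m ≠ 0`.
  set m := b⁻¹ * (a - b)
  have hfu₀ : f u₀ = m • f u := by
    rw [mul_smul, sub_smul, hb, add_sub_cancel_left, smul_smul, inv_mul_cancel₀ hb₀, one_smul]
  have hm : m ≠ 0 := by rintro hm; simp [hm, hu₀] at hfu₀
  obtain ⟨d, hd⟩ := hf (u₀ - m • u)
  rw [map_sub, map_sub, map_smul, map_smul, hfu₀, sub_self, smul_zero, h₀, zero_sub,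
    neg_eq_zero, smul_eq_zero] at hd
  exact hd.resolve_left hm

theorem LinearMap.exists_eq_smul_of_forall_exists_apply_eq_smul {f g : E →ₗ[𝕜] F}
    (h : ∀ u, ∃ c : 𝕜, g u = c • f u) : ∃ c : 𝕜, g = c • f := by
  by_cases hf : f = 0
  · refine ⟨0, LinearMap.ext fun u => ?_⟩
    obtain ⟨c, hc⟩ := h u
    simp [hc, hf]
  obtain ⟨u₀, hu₀⟩ : ∃ u₀, f u₀ ≠ 0 := by
    by_contra! h0
    exact hf (LinearMap.ext h0)
  obtain ⟨c₀, hc₀⟩ := h u₀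
  refine ⟨c₀, sub_eq_zero.mp (eq_zero_of_forall_exists_apply_eq_smul (f := f) (u₀ := u₀)
    (fun u => ?_) hu₀ (by simp [hc₀]))⟩
  obtain ⟨c, hc⟩ := h u
  exact ⟨c - c₀, by simp [hc, sub_smul]⟩

theorem Matrix.mem_span_singleton_iff_forall_dotProduct_mulVec_eq_zero {m n : Type*}
    [Fintype m] [Fintype n] [DecidableEq n] {M N : Matrix m n 𝕜} :
    N ∈ 𝕜 ∙ M ↔ ∀ x y, x ⬝ᵥ M *ᵥ y = 0 → x ⬝ᵥ N *ᵥ y = 0 := by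
  rw [Submodule.mem_span_singleton]
  constructor
  · rintro ⟨c, rfl⟩ x y h
    simp [smul_mulVec, h]
  · intro h
    obtain ⟨c, hc⟩ := LinearMap.exists_eq_smul_of_forall_exists_apply_eq_smul
      (f := M.mulVecLin) (g := N.mulVecLin) fun y =>
        exists_eq_smul_of_forall_dotProduct_eq_zero fun x => h x y
    exact ⟨c, Matrix.toLin'.injective (by rw [map_smul]; exact hc.symm)⟩

theorem Matrix.mem_span_singleton_iff_forall_ne_zero_star_dotProduct_mulVec_eq_zero
    [StarRing 𝕜] {m n : Type*} [Fintype m] [Fintype n] [DecidableEq n] {M N : Matrix m n 𝕜} :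
    N ∈ 𝕜 ∙ M ↔
      ∀ x y, x ≠ 0 → y ≠ 0 → star x ⬝ᵥ M *ᵥ y = 0 → star x ⬝ᵥ N *ᵥ y = 0 := by
  rw [mem_span_singleton_iff_forall_dotProduct_mulVec_eq_zero, star_involutive.surjective.forall]
  refine forall_congr' fun x => forall_congr' fun y => ⟨fun h _ _ => h, fun h => ?_⟩
  rcases eq_or_ne x 0 with rfl | hx
  · simp
  rcases eq_or_ne y 0 with rfl | hy
  · simp
  exact h hx hy

theorem stmt2 {n : ℕ} (A B : Matrix (Fin n) (Fin n) ℂ) :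
    Submodule.span ℂ {A} = Submodule.span ℂ {B} ↔
      ∀ x y : Fin n → ℂ, x ≠ 0 → y ≠ 0 →
        (dotProduct (star x) (A.mulVec y) = 0 ↔
          dotProduct (star x) (B.mulVec y) = 0) := by
  rw [le_antisymm_iff, Submodule.span_singleton_le_iff_mem, Submodule.span_singleton_le_iff_mem,
    mem_span_singleton_iff_forall_ne_zero_star_dotProduct_mulVec_eq_zero,
    mem_span_singleton_iff_forall_ne_zero_star_dotProduct_mulVec_eq_zero]
  exact ⟨fun ⟨hBA, hAB⟩ x y hx hy => ⟨hAB x y hx hy, hBA x y hx hy⟩,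
    fun h => ⟨fun x y hx hy => (h x y hx hy).2, fun x y hx hy => (h x y hx hy).1⟩⟩
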